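/- Suppose an instance of P2,S1|s_j,t_j|C_max satisfies s_i ≤ p_j and p_i < t_j for all pairs of jobs i, j. Then the minimum makespan over all feasible schedules equals Σ_{j=1}^n A_j, and for every permutation π of the jobs the sequential schedule σ_{π(k)} = Σ_{l<k} A_{π(l)} (with all jobs on one machine) is an optimal schedule; that is, all permutations define an optimal solution. -/

import Mathlib

open Finset

/-- An instance of the problem `P2,S1|s_j,t_j|C_max`: `n` jobs, each with positive
loading time `s j`, processing time `p j`, and unloading time `t j`. -/
structure PInstance (n : ℕ) where
  s : Fin n → ℝ
  p : Fin n → ℝ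
  t : Fin n → ℝ
  s_pos : ∀ j, 0 < s j
  p_pos : ∀ j, 0 < p j
  t_pos : ∀ j, 0 < t j

namespace PInstance

variable {n : ℕ}

/-- The length `A j = s j + p j + t j` of job `j`. -/
def A (I : PInstance n) (j : Fin n) : ℝ := I.s j + I.p j + I.t j

/-- Feasibility of the schedule assigning start time `σ j` and machine `μ j` to job `j`:
start times are nonnegative, machines are in `{1, 2}`, distinct jobs on the same machine
occupy disjoint half-open intervals `[σ j, σ j + A j)`, and the `2n` server intervals
(the loading intervals `[σ j, σ j + s j)` and the unloading intervals
`[σ j + s j + p j, σ j + A j)`) are pairwise disjoint. -/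
def Feasible (I : PInstance n) (σ : Fin n → ℝ) (μ : Fin n → ℕ) : Prop :=
  (∀ j, 0 ≤ σ j) ∧
  (∀ j, μ j = 1 ∨ μ j = 2) ∧
  (∀ i j, i ≠ j → μ i = μ j → σ i + I.A i ≤ σ j ∨ σ j + I.A j ≤ σ i) ∧
  (∀ i j, i ≠ j → σ i + I.s i ≤ σ j ∨ σ j + I.s j ≤ σ i) ∧
  (∀ i j, i ≠ j →
    σ i + I.A i ≤ σ j + I.s j + I.p j ∨ σ j + I.A j ≤ σ i + I.s i + I.p i) ∧
  (∀ i j, σ i + I.s i ≤ σ j + I.s j + I.p j ∨ σ j + I.A j ≤ σ i)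

/-- `C` is the makespan of the schedule with start times `σ`:
`C = max_{j=1,…,n} (σ j + A j)`. -/
def IsMakespan (I : PInstance n) (σ : Fin n → ℝ) (C : ℝ) : Prop :=
  (∀ j, σ j + I.A j ≤ C) ∧ ∃ j, σ j + I.A j = C

end PInstance

/-!
When every unloading time exceeds every processing time, no two jobs can overlap in time at
all, even on different machines: the job that loads second must load during the other job's
processing, and then one of the two unloadings would have to fit into a processing phase.
So every feasible schedule is sequential, its makespan is at least `∑ A j`, and every
sequential schedule attains this bound.
-/

theorem sum_le_of_pairwise_disjoint_intervals {ι : Type*} [DecidableEq ι] (S : Finset ι)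
    (a d : ι → ℝ)
    (ha : ∀ i ∈ S, 0 ≤ a i) (hd : ∀ i ∈ S, 0 < d i)
    (hdisj : (S : Set ι).Pairwise fun i j => a i + d i ≤ a j ∨ a j + d j ≤ a i)
    {C : ℝ} (hC : 0 ≤ C) (hend : ∀ i ∈ S, a i + d i ≤ C) :
    ∑ i ∈ S, d i ≤ C := by
  induction S using Finset.induction_on_max_value a generalizing C with
  | empty => simpa using hC
  | insert k S hkS hmax ih =>
    have hk : k ∈ insert k S := mem_insert_self k S
    have hbefore : ∀ i ∈ S, a i + d i ≤ a k := by
      intro i hi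
      have hik : i ≠ k := ne_of_mem_of_not_mem hi hkS
      rcases hdisj (by simp [hi]) (by simp) hik with h | h
      · exact h
      · linarith [hmax i hi, hd k hk]
    have hS : ∑ i ∈ S, d i ≤ a k :=
      ih (fun i hi => ha i (mem_insert_of_mem hi)) (fun i hi => hd i (mem_insert_of_mem hi))
        (hdisj.mono (by simp)) (ha k hk) hbefore
    rw [sum_insert hkS]
    linarith [hend k hk]

section Sequential

variable {n : ℕ} (A : Fin n → ℝ) (π : Equiv.Perm (Fin n))

def sequentialStart (j : Fin n) : ℝ :=
  ∑ l ∈ univ.filter (fun l => l < π.symm j), A (π l)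

theorem sequentialStart_add (j : Fin n) :
    sequentialStart A π j + A j = ∑ l ∈ univ.filter (fun l => l ≤ π.symm j), A (π l) := by
  have hIic : univ.filter (fun l => l ≤ π.symm j) =
      insert (π.symm j) (univ.filter (· < π.symm j)) := by
    ext l
    simp [le_iff_lt_or_eq, or_comm]
  rw [hIic, sum_insert (by simp), Equiv.apply_symm_apply, add_comm]
  rfl

variable {A}

theorem sequentialStart_nonneg (hA : ∀ j, 0 ≤ A j) (j : Fin n) : 0 ≤ sequentialStart A π j :=
  sum_nonneg fun l _ => hA (π l)

theorem sequentialStart_add_le_sum (hA : ∀ j, 0 ≤ A j) (j : Fin n) :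
    sequentialStart A π j + A j ≤ ∑ j, A j := by
  rw [sequentialStart_add, ← Equiv.sum_comp π A]
  exact sum_le_sum_of_subset_of_nonneg (filter_subset _ _) fun l _ _ => hA (π l)

theorem sequentialStart_add_of_lt (hA : ∀ j, 0 ≤ A j) {i j : Fin n}
    (hij : π.symm i < π.symm j) :
    sequentialStart A π i + A i ≤ sequentialStart A π j := by
  rw [sequentialStart_add]
  refine sum_le_sum_of_subset_of_nonneg ?_ fun l _ _ => hA (π l)
  intro l
  simp only [mem_filter, mem_univ, true_and]
  exact fun hl => hl.trans_lt hij

theorem sequentialStart_disjoint (hA : ∀ j, 0 ≤ A j) {i j : Fin n} (hij : i ≠ j) :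
    sequentialStart A π i + A i ≤ sequentialStart A π j ∨
      sequentialStart A π j + A j ≤ sequentialStart A π i := by
  rcases lt_or_gt_of_ne (π.symm.injective.ne hij) with h | h
  · exact Or.inl (sequentialStart_add_of_lt π hA h)
  · exact Or.inr (sequentialStart_add_of_lt π hA h)

end Sequential

theorem sequentialStart_add_last {m : ℕ} (A : Fin (m + 1) → ℝ)
    (π : Equiv.Perm (Fin (m + 1))) :
    sequentialStart A π (π (Fin.last m)) + A (π (Fin.last m)) = ∑ j, A j := by
  rw [sequentialStart_add, Equiv.symm_apply_apply, ← Equiv.sum_comp π A]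
  congr 1
  ext l
  simp [Fin.le_last]

namespace PInstance

variable {n : ℕ} (I : PInstance n)

theorem A_pos (j : Fin n) : 0 < I.A j := by
  unfold A
  linarith [I.s_pos j, I.p_pos j, I.t_pos j]

theorem feasible_of_sequential {σ : Fin n → ℝ} (hσ : ∀ j, 0 ≤ σ j)
    (hdisj : ∀ i j, i ≠ j → σ i + I.A i ≤ σ j ∨ σ j + I.A j ≤ σ i) :
    I.Feasible σ fun _ => 1 := by
  refine ⟨hσ, fun _ => Or.inl rfl, fun i j hij _ => hdisj i j hij, ?_, ?_, ?_⟩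
  · intro i j hij
    rcases hdisj i j hij with h | h
    · left; unfold A at h; linarith [I.p_pos i, I.t_pos i]
    · right; unfold A at h; linarith [I.p_pos j, I.t_pos j]
  · intro i j hij
    rcases hdisj i j hij with h | h
    · left; linarith [I.s_pos j, I.p_pos j]
    · right; linarith [I.s_pos i, I.p_pos i]
  · intro i j
    by_cases hij : i = j
    · subst hij; left; linarith [I.p_pos i]
    · rcases hdisj i j hij with h | h
      · left; unfold A at h; linarith [I.p_pos i, I.t_pos i, I.s_pos j, I.p_pos j]
      · right; exact h

variable {I}

theorem Feasible.disjoint_of_p_lt_t (hpt : ∀ i j, I.p i < I.t j) {σ : Fin n → ℝ}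
    {μ : Fin n → ℕ} (hf : I.Feasible σ μ) {i j : Fin n} (hij : i ≠ j) :
    σ i + I.A i ≤ σ j ∨ σ j + I.A j ≤ σ i := by
  obtain ⟨-, -, -, hload, hunload, hload_unload⟩ := hf
  suffices key : ∀ i j, i ≠ j → σ i + I.s i ≤ σ j →
      σ i + I.A i ≤ σ j ∨ σ j + I.A j ≤ σ i by
    rcases hload i j hij with h | h
    · exact key i j hij h
    · exact (key j i hij.symm h).symm
  intro i j hij hij_load
  by_contra! hoverlap
  unfold A at hoverlap hunload
  have hj_load : σ j + I.s j ≤ σ i + I.s i + I.p i := by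
    rcases hload_unload j i with h | h
    · exact h
    · exact absurd h (not_le.2 hoverlap.1)
  -- Now one unloading would lie inside the other job's processing, which `p < t` forbids.
  rcases hunload i j hij with h | h
  · linarith [hpt j i]
  · linarith [hpt i j, I.s_pos j, I.p_pos j]

theorem Feasible.sum_A_le_of_p_lt_t (hpt : ∀ i j, I.p i < I.t j) {σ : Fin n → ℝ}
    {μ : Fin n → ℕ} (hf : I.Feasible σ μ) {C : ℝ} (hC : I.IsMakespan σ C) :
    ∑ j, I.A j ≤ C := by
  obtain ⟨hend, j, hj⟩ := hC
  have hC_nonneg : 0 ≤ C := hj ▸ add_nonneg (hf.1 j) (I.A_pos j).le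
  exact sum_le_of_pairwise_disjoint_intervals univ σ I.A (fun j _ => hf.1 j)
    (fun j _ => I.A_pos j) (fun i _ j _ hij => hf.disjoint_of_p_lt_t hpt hij) hC_nonneg
    (fun j _ => hend j)

end PInstance

theorem long_unloading_all_permutations_optimal_general {n : ℕ} (hn : 0 < n) (I : PInstance n)
    (hpt : ∀ i j, I.p i < I.t j) :
    (∀ (σ : Fin n → ℝ) (μ : Fin n → ℕ) (C : ℝ),
        I.Feasible σ μ → I.IsMakespan σ C → (∑ j, I.A j) ≤ C) ∧
      (∀ π : Equiv.Perm (Fin n),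
        I.Feasible
            (fun j => ∑ l ∈ Finset.univ.filter (fun l => l < π.symm j), I.A (π l))
            (fun _ => 1) ∧
          I.IsMakespan
            (fun j => ∑ l ∈ Finset.univ.filter (fun l => l < π.symm j), I.A (π l))
            (∑ j, I.A j)) := by
  obtain ⟨m, rfl⟩ : ∃ m, n = m + 1 := ⟨n - 1, by omega⟩
  refine ⟨fun σ μ C hf hC => hf.sum_A_le_of_p_lt_t hpt hC, fun π => ?_⟩
  have hA : ∀ j, 0 ≤ I.A j := fun j => (I.A_pos j).le
  refine ⟨I.feasible_of_sequential (sequentialStart_nonneg π hA)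
      (fun i j hij => sequentialStart_disjoint π hA hij),
    sequentialStart_add_le_sum π hA, π (Fin.last m), sequentialStart_add_last I.A π⟩

/-- If `s i ≤ p j` and `p i < t j` for all pairs of jobs `i, j`, then the
minimum makespan over all feasible schedules equals `Σ_j A j`, and for every permutation
`π` the sequential schedule `σ (π k) = Σ_{l < k} A (π l)` (all jobs on one machine) is
optimal; that is, all permutations define an optimal solution. -/
theorem long_unloading_all_permutations_optimal {n : ℕ} (hn : 0 < n) (I : PInstance n)
    (hsp : ∀ i j, I.s i ≤ I.p j) (hpt : ∀ i j, I.p i < I.t j) :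
    (∀ (σ : Fin n → ℝ) (μ : Fin n → ℕ) (C : ℝ),
        I.Feasible σ μ → I.IsMakespan σ C → (∑ j, I.A j) ≤ C) ∧
      (∀ π : Equiv.Perm (Fin n),
        I.Feasible
            (fun j => ∑ l ∈ Finset.univ.filter (fun l => l < π.symm j), I.A (π l))
            (fun _ => 1) ∧
          I.IsMakespan
            (fun j => ∑ l ∈ Finset.univ.filter (fun l => l < π.symm j), I.A (π l))
            (∑ j, I.A j)) :=
  long_unloading_all_permutations_optimal_general hn I hpt
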